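/- For the function c(τ,x) = ∫₀² (4π(τ+2s))^{-3/2} exp(-x²/(4(τ+2s))) ds on ℝ₊ × ℝ³, there exist constants C, c > 0 such that c(τ,x) ≤ C(e^{-c|x|²}(|x|² + τ)^{-1/2} 1_{τ∈[0,2]} + τ^{-3/2} e^{-c|x|²/τ} 1_{τ>2}). -/

import Mathlib

/-!
For `τ ≤ 2` every time `t = τ + 2s` lies in `(0, 6]`. With `y = |x|²/t` one has
`t^{-3/2} = (|x|² + t)^{-3/2} (1 + y)^{3/2}`, and half of the Gaussian factor `e^{-y/4}` absorbs
`(1 + y)^{3/2}` while the other half is at most `e^{-|x|²/48}`; integrating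
`(|x|² + τ + 2s)^{-3/2}` over `s` gives `(|x|² + τ)^{-1/2}`.
For `τ ≥ 2` the time `t` is comparable to `τ` (`τ ≤ t ≤ 3τ`), so the integrand is at most
`τ^{-3/2} e^{-|x|²/(12τ)}` on an interval of length `2`.
-/

open MeasureTheory Real Set

noncomputable section

abbrev E3 := EuclideanSpace ℝ (Fin 3)

/-- `c(τ,x) = ∫₀² (4π(τ+2s))^{-3/2} exp(-|x|²/(4(τ+2s))) ds`. -/
def cker (τ : ℝ) (x : E3) : ℝ :=
  ∫ s in Set.Ioc (0:ℝ) 2,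
    (4 * Real.pi * (τ + 2*s)) ^ (-(3:ℝ)/2) * Real.exp (-‖x‖^2 / (4 * (τ + 2*s)))

theorem one_add_rpow_three_halves_le_exp {y : ℝ} (hy : 0 ≤ y) :
    (1 + y) ^ ((3:ℝ)/2) ≤ 256 * exp (y / 8) :=
  calc (1 + y) ^ ((3:ℝ)/2) ≤ (1 + y) ^ (2:ℝ) :=
        rpow_le_rpow_of_exponent_le (by linarith) (by norm_num)
    _ = (1 + y) ^ 2 := rpow_two _
    _ ≤ (16 * exp (y / 16)) ^ 2 := by gcongr; linarith [add_one_le_exp (y / 16)]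
    _ = 256 * exp (y / 8) := by rw [mul_pow, sq (exp _), ← exp_add]; ring_nf

theorem rpow_neg_three_halves_mul_exp_le {q u T : ℝ} (hq : 0 ≤ q) (hu : 0 < u) (huT : u ≤ T) :
    u ^ (-(3:ℝ)/2) * exp (-q / (4 * u)) ≤ 256 * exp (-q / (8 * T)) * (q + u) ^ (-(3:ℝ)/2) := by
  set y := q / u with hy_def
  have hy : 0 ≤ y := by positivity
  have hsplit : u ^ (-(3:ℝ)/2) = (q + u) ^ (-(3:ℝ)/2) * (1 + y) ^ ((3:ℝ)/2) := by
    rw [show q + u = u * (1 + y) by rw [hy_def]; field_simp; ring, mul_rpow hu.le (by positivity),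
      mul_assoc, ← rpow_add (by positivity)]
    norm_num
  have hhalf : exp (-q / (4 * u)) = exp (-(y / 8)) * exp (-(y / 8)) := by
    rw [← exp_add, hy_def]; ring_nf
  have hT : exp (-(y / 8)) ≤ exp (-q / (8 * T)) := by
    rw [exp_le_exp, neg_div, neg_le_neg_iff, hy_def, div_div, mul_comm u]
    exact div_le_div_of_nonneg_left hq (by positivity) (by linarith)
  calc u ^ (-(3:ℝ)/2) * exp (-q / (4 * u))
      = (q + u) ^ (-(3:ℝ)/2) * ((1 + y) ^ ((3:ℝ)/2) * exp (-(y / 8))) * exp (-(y / 8)) := by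
        rw [hsplit, hhalf]; ring
    _ ≤ (q + u) ^ (-(3:ℝ)/2) * (256 * exp (y / 8) * exp (-(y / 8))) * exp (-q / (8 * T)) := by
        gcongr; exact one_add_rpow_three_halves_le_exp hy
    _ = 256 * exp (-q / (8 * T)) * (q + u) ^ (-(3:ℝ)/2) := by
        rw [mul_assoc 256, ← exp_add, add_neg_cancel, exp_zero]; ring

theorem setIntegral_Ioc_add_two_mul_rpow {a : ℝ} (ha : 0 < a) {L : ℝ} (hL : 0 ≤ L) :
    ∫ s in Ioc 0 L, (a + 2 * s) ^ (-(3:ℝ)/2) = a ^ (-(1:ℝ)/2) - (a + 2 * L) ^ (-(1:ℝ)/2) := by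
  have h0 : (0:ℝ) ∉ uIcc (2 * 0 + a) (2 * L + a) := by
    rw [uIcc_of_le (by linarith)]; exact fun h => by linarith [h.1]
  rw [← intervalIntegral.integral_of_le hL]
  simp_rw [add_comm a (2 * _)]
  rw [intervalIntegral.integral_comp_mul_add (fun t => t ^ (-(3:ℝ)/2)) two_ne_zero a,
    integral_rpow (Or.inr ⟨by norm_num, h0⟩)]
  norm_num
  ring

def heatKernel (t : ℝ) (x : E3) : ℝ :=
  (4 * π * t) ^ (-(3:ℝ)/2) * exp (-‖x‖ ^ 2 / (4 * t))

section heatKernel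

variable {t : ℝ} (x : E3)

theorem heatKernel_nonneg (ht : 0 ≤ t) : 0 ≤ heatKernel t x := by
  unfold heatKernel; positivity

theorem heatKernel_le_rpow_mul_exp (ht : 0 < t) :
    heatKernel t x ≤ t ^ (-(3:ℝ)/2) * exp (-‖x‖ ^ 2 / (4 * t)) := by
  refine mul_le_mul_of_nonneg_right (rpow_le_rpow_of_nonpos ht ?_ (by norm_num)) (exp_pos _).le
  nlinarith [pi_gt_three]

theorem heatKernel_le_exp_mul_rpow {T : ℝ} (ht : 0 < t) (htT : t ≤ T) :
    heatKernel t x ≤ 256 * exp (-‖x‖ ^ 2 / (8 * T)) * (‖x‖ ^ 2 + t) ^ (-(3:ℝ)/2) :=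
  (heatKernel_le_rpow_mul_exp x ht).trans
    (rpow_neg_three_halves_mul_exp_le (by positivity) ht htT)

theorem heatKernel_le_of_le_of_le {τ T : ℝ} (hτ : 0 < τ) (hτt : τ ≤ t) (htT : t ≤ T) :
    heatKernel t x ≤ τ ^ (-(3:ℝ)/2) * exp (-‖x‖ ^ 2 / (4 * T)) := by
  refine (heatKernel_le_rpow_mul_exp x (hτ.trans_le hτt)).trans ?_
  refine mul_le_mul (rpow_le_rpow_of_nonpos hτ hτt (by norm_num)) ?_ (exp_pos _).le
    (rpow_nonneg hτ.le _)
  rw [exp_le_exp, neg_div, neg_div, neg_le_neg_iff]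
  exact div_le_div_of_nonneg_left (by positivity) (by linarith) (by linarith)

end heatKernel

section cker

variable {τ : ℝ} (x : E3)

theorem cker_eq_setIntegral_heatKernel : cker τ x = ∫ s in Ioc 0 2, heatKernel (τ + 2 * s) x :=
  rfl

theorem cker_le_setIntegral (hτ : 0 ≤ τ) {g : ℝ → ℝ} (hg : IntegrableOn g (Ioc 0 2))
    (hle : ∀ s ∈ Ioc (0:ℝ) 2, heatKernel (τ + 2 * s) x ≤ g s) :
    cker τ x ≤ ∫ s in Ioc 0 2, g s := by
  rw [cker_eq_setIntegral_heatKernel]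
  refine integral_mono_of_nonneg ?_ hg ((ae_restrict_iff' measurableSet_Ioc).2 (.of_forall hle))
  refine (ae_restrict_iff' measurableSet_Ioc).2 (.of_forall fun s hs => ?_)
  exact heatKernel_nonneg x (by linarith [hs.1])

-- `s ↦ H(2s, 0) ∝ s^{-3/2}` is not integrable at `0`, so the integral takes its junk value `0`.
theorem cker_zero_zero : cker 0 0 = 0 := by
  rw [cker_eq_setIntegral_heatKernel]
  refine integral_undef fun h => ?_
  have hint : IntegrableOn (fun s : ℝ => s ^ (-(3:ℝ)/2)) (Ioo 0 2) := by
    refine IntegrableOn.congr_fun ((IntegrableOn.mono_set h Ioo_subset_Ioc_self).const_mul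
      ((8 * π) ^ ((3:ℝ)/2))) (fun s hs => ?_) measurableSet_Ioo
    have h8π : 0 < 8 * π := by positivity
    simp only [heatKernel, norm_zero, zero_add]
    rw [show 4 * π * (2 * s) = 8 * π * s by ring, mul_rpow h8π.le hs.1.le, ← mul_assoc,
      ← mul_assoc, ← rpow_add h8π]
    norm_num
  exact absurd ((intervalIntegral.integrableOn_Ioo_rpow_iff two_pos).1 hint) (by norm_num)

theorem cker_le_of_le_two (hτ : 0 ≤ τ) (hτ2 : τ ≤ 2) :
    cker τ x ≤ 256 * exp (-‖x‖ ^ 2 / 48) * (‖x‖ ^ 2 + τ) ^ (-(1:ℝ)/2) := by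
  obtain h | h := (add_nonneg (sq_nonneg ‖x‖) hτ).eq_or_lt
  · obtain rfl : τ = 0 := by nlinarith [sq_nonneg ‖x‖]
    obtain rfl : x = 0 := by simpa using h.symm
    rw [← h, zero_rpow (by norm_num), mul_zero, cker_zero_zero]
  have hint : IntegrableOn (fun s => 256 * exp (-‖x‖ ^ 2 / (8 * 6)) *
      (‖x‖ ^ 2 + τ + 2 * s) ^ (-(3:ℝ)/2)) (Ioc 0 2) :=
    (ContinuousOn.integrableOn_Icc (continuousOn_const.mul (ContinuousOn.rpow_const
      (by fun_prop) fun s hs => Or.inl (by linarith [hs.1])))).mono_set Ioc_subset_Icc_self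
  calc cker τ x
      ≤ ∫ s in Ioc 0 2, 256 * exp (-‖x‖ ^ 2 / (8 * 6)) * (‖x‖ ^ 2 + τ + 2 * s) ^ (-(3:ℝ)/2) :=
        cker_le_setIntegral x hτ hint fun s hs => by
          rw [add_assoc]
          exact heatKernel_le_exp_mul_rpow x (by linarith [hs.1]) (by linarith [hs.2])
    _ = 256 * exp (-‖x‖ ^ 2 / 48) *
          ((‖x‖ ^ 2 + τ) ^ (-(1:ℝ)/2) - (‖x‖ ^ 2 + τ + 2 * 2) ^ (-(1:ℝ)/2)) := by
        rw [integral_const_mul, setIntegral_Ioc_add_two_mul_rpow h zero_le_two]; norm_num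
    _ ≤ 256 * exp (-‖x‖ ^ 2 / 48) * (‖x‖ ^ 2 + τ) ^ (-(1:ℝ)/2) := by
        gcongr
        exact sub_le_self _ (rpow_nonneg (by positivity) _)

theorem cker_le_of_two_le (hτ : 2 ≤ τ) :
    cker τ x ≤ 2 * τ ^ (-(3:ℝ)/2) * exp (-‖x‖ ^ 2 / (12 * τ)) := by
  have hτ0 : 0 < τ := by linarith
  calc cker τ x ≤ ∫ _ in Ioc (0:ℝ) 2, τ ^ (-(3:ℝ)/2) * exp (-‖x‖ ^ 2 / (4 * (3 * τ))) :=
        cker_le_setIntegral x hτ0.le (integrableOn_const (by simp)) fun s hs =>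
          heatKernel_le_of_le_of_le x hτ0 (by linarith [hs.1]) (by linarith [hs.2])
    _ = 2 * τ ^ (-(3:ℝ)/2) * exp (-‖x‖ ^ 2 / (12 * τ)) := by
        rw [setIntegral_const, Real.volume_real_Ioc_of_le zero_le_two, smul_eq_mul]; ring_nf

end cker

/-- Pointwise bound on the time-integrated heat kernel:
`c(τ,x) ≤ C (e^{-c|x|²}(|x|²+τ)^{-1/2} 1_{τ∈[0,2]} + τ^{-3/2} e^{-c|x|²/τ} 1_{τ>2})`. -/
theorem cker_bound : ∃ C > (0:ℝ), ∃ c > (0:ℝ), ∀ τ : ℝ, 0 ≤ τ → ∀ x : E3,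
    cker τ x ≤ C * ((if τ ≤ 2 then Real.exp (-c * ‖x‖^2) * (‖x‖^2 + τ) ^ (-(1:ℝ)/2) else 0)
      + (if 2 < τ then τ ^ (-(3:ℝ)/2) * Real.exp (-c * ‖x‖^2 / τ) else 0)) := by
  refine ⟨256, by norm_num, 1 / 48, by norm_num, fun τ hτ x => ?_⟩
  rcases le_or_gt τ 2 with hτ2 | hτ2
  · rw [if_pos hτ2, if_neg hτ2.not_gt, add_zero, ← mul_assoc,
      show -(1 / 48) * ‖x‖ ^ 2 = -‖x‖ ^ 2 / 48 by ring]
    exact cker_le_of_le_two x hτ hτ2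
  · rw [if_neg hτ2.not_ge, if_pos hτ2, zero_add]
    have hexp : exp (-‖x‖ ^ 2 / (12 * τ)) ≤ exp (-(1 / 48) * ‖x‖ ^ 2 / τ) := by
      rw [exp_le_exp, neg_mul, neg_div, neg_div, neg_le_neg_iff, mul_comm, mul_one_div, div_div]
      exact div_le_div_of_nonneg_left (by positivity) (by positivity) (by linarith)
    calc cker τ x ≤ 2 * τ ^ (-(3:ℝ)/2) * exp (-‖x‖ ^ 2 / (12 * τ)) := cker_le_of_two_le x hτ2.le
      _ ≤ 256 * (τ ^ (-(3:ℝ)/2) * exp (-(1 / 48) * ‖x‖ ^ 2 / τ)) := by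
        rw [mul_assoc]; gcongr; norm_num

end
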